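/- arXiv:0801.3174 — 9 statements merged into one kernel-verified Lean document; each statement's English description precedes it below -/
import Mathlib

section
/- For every j ∈ {1,…,J}, the J−1 vectors {d_k : k ∈ {1,…,J}, k ≠ j} span the hyperplane H := {x ∈ ℝ^J : Σ_{i=1}^J x_i = 0} (and hence, since H has dimension J−1, they form a basis of H). -/
/-!
With `v_k = e_k - β` one has `d_k = (1 - β_k)⁻¹ • v_k` and
`∑ k, a_k • v_k = a - (∑ k, a_k) • β`. Hence every `x ∈ H` is `∑ k, x_k • v_k`,
and the relation `∑ k, β_k • v_k = 0` with `β_j ≠ 0` puts `v_j` in the span of the other `v_k`.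
If `∑ k ≠ j, a_k • v_k = 0`, the `j`-th coordinate gives `(∑ a) β_j = 0`, so `∑ a = 0` and
then every `a_k = 0`.
-/

open Finset Submodule

section ScaledFamilies

variable {K M ι : Type*} [Field K] [AddCommGroup M] [Module K M]

theorem span_image_smul_of_ne_zero {v : ι → M} {c : ι → K} {s : Set ι}
    (hc : ∀ i ∈ s, c i ≠ 0) :
    span K ((fun i ↦ c i • v i) '' s) = span K (v '' s) := by
  refine le_antisymm (span_le.2 ?_) (span_le.2 ?_) <;> rintro _ ⟨i, hi, rfl⟩
  · exact smul_mem _ _ (subset_span ⟨i, hi, rfl⟩)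
  · rw [← inv_smul_smul₀ (hc i hi) (v i)]
    exact smul_mem _ _ (subset_span ⟨i, hi, rfl⟩)

theorem linearIndepOn_smul_of_ne_zero {v : ι → M} {c : ι → K} {s : Set ι}
    (hv : LinearIndepOn K v s) (hc : ∀ i ∈ s, c i ≠ 0) :
    LinearIndepOn K (fun i ↦ c i • v i) s :=
  hv.units_smul fun i ↦ Units.mk0 (c i) (hc i i.2)

end ScaledFamilies

section SingleSub

variable {K ι : Type*} [Field K] {β : ι → K}

theorem sum_smul_single_sub_apply [DecidableEq ι] (s : Finset ι) (a : ι → K) (l : ι) :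
    (∑ i ∈ s, a i • (Pi.single i 1 - β) : ι → K) l =
      (if l ∈ s then a l else 0) - (∑ i ∈ s, a i) * β l := by
  simp only [Finset.sum_apply, Pi.smul_apply, Pi.sub_apply, smul_eq_mul, mul_sub,
    sum_sub_distrib, ← sum_mul, Pi.single_apply, mul_ite, mul_one, mul_zero, sum_ite_eq]

variable (K ι) [Fintype ι]

def sumZeroSubmodule : Submodule K (ι → K) :=
  LinearMap.ker (∑ i : ι, LinearMap.proj i)

variable {K ι}

@[simp]
theorem mem_sumZeroSubmodule {x : ι → K} : x ∈ sumZeroSubmodule K ι ↔ ∑ i, x i = 0 := by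
  simp [sumZeroSubmodule]

variable [DecidableEq ι]

theorem single_sub_mem_sumZeroSubmodule (hβ : ∑ i, β i = 1) (k : ι) :
    Pi.single k 1 - β ∈ sumZeroSubmodule K ι := by
  simp [sum_sub_distrib, hβ]

theorem eq_sum_smul_single_sub {x : ι → K} (hx : ∑ i, x i = 0) :
    x = ∑ i, x i • (Pi.single i 1 - β) := by
  ext l
  rw [sum_smul_single_sub_apply, if_pos (mem_univ l), hx, zero_mul, sub_zero]

theorem sum_smul_single_sub_self (hβ : ∑ i, β i = 1) :
    ∑ i, β i • (Pi.single i 1 - β) = 0 := by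
  ext l
  rw [sum_smul_single_sub_apply, if_pos (mem_univ l), hβ, one_mul, sub_self, Pi.zero_apply]

theorem single_sub_mem_span_image_ne (hβ : ∑ i, β i = 1) {j : ι} (hj : β j ≠ 0) :
    Pi.single j 1 - β ∈ span K ((fun k ↦ Pi.single k 1 - β) '' {k | k ≠ j}) := by
  have hrel := sum_smul_single_sub_self hβ
  rw [← add_sum_erase _ _ (mem_univ j), add_eq_zero_iff_eq_neg] at hrel
  rw [← inv_smul_smul₀ hj (Pi.single j 1 - β), hrel]
  refine smul_mem _ _ (neg_mem (sum_mem fun k hk ↦ smul_mem _ _ (subset_span ?_)))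
  exact ⟨k, ne_of_mem_erase hk, rfl⟩

theorem span_single_sub_image_ne (hβ : ∑ i, β i = 1) {j : ι} (hj : β j ≠ 0) :
    span K ((fun k ↦ Pi.single k 1 - β) '' {k | k ≠ j}) = sumZeroSubmodule K ι := by
  refine le_antisymm (span_le.2 ?_) fun x hx ↦ ?_
  · rintro _ ⟨k, -, rfl⟩
    exact single_sub_mem_sumZeroSubmodule hβ k
  · rw [eq_sum_smul_single_sub (β := β) (mem_sumZeroSubmodule.1 hx)]
    refine sum_mem fun k _ ↦ smul_mem _ _ ?_
    obtain rfl | hk := eq_or_ne k j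
    · exact single_sub_mem_span_image_ne hβ hj
    · exact subset_span ⟨k, hk, rfl⟩

theorem linearIndepOn_single_sub_ne {j : ι} (hj : β j ≠ 0) :
    LinearIndepOn K (fun k ↦ Pi.single k 1 - β) {k | k ≠ j} := by
  have hs : ((univ.erase j : Finset ι) : Set ι) = {k | k ≠ j} := by ext; simp
  rw [← hs, linearIndepOn_finset_iff]
  intro a ha
  have hsum : ∑ i ∈ univ.erase j, a i = 0 := by
    have hj' := congrFun ha j
    rw [sum_smul_single_sub_apply, if_neg (notMem_erase j univ), zero_sub, Pi.zero_apply,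
      neg_eq_zero] at hj'
    exact (mul_eq_zero.1 hj').resolve_right hj
  intro k hk
  have hk' := congrFun ha k
  rwa [sum_smul_single_sub_apply, if_pos hk, hsum, zero_mul, sub_zero] at hk'

end SingleSub

theorem gps_directions_span_hyperplane_general
    (J : ℕ) (β : Fin J → ℝ)
    (hβ : ∀ i, 0 < β i ∧ β i < 1) (hβsum : ∑ i, β i = 1)
    (d : Fin J → Fin J → ℝ)
    (hd : ∀ i j, d i j = if j = i then 1 else -(β j) / (1 - β i))
    (j : Fin J) :
    (Submodule.span ℝ (d '' {k | k ≠ j}) : Set (Fin J → ℝ))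
        = {x : Fin J → ℝ | ∑ i, x i = 0} ∧
    LinearIndependent ℝ (fun k : {k : Fin J // k ≠ j} => d k) := by
  have hβ1 : ∀ k, 1 - β k ≠ 0 := fun k ↦ (sub_pos.2 (hβ k).2).ne'
  have hβj : β j ≠ 0 := (hβ j).1.ne'
  obtain rfl : d = fun k ↦ (1 - β k)⁻¹ • (Pi.single k 1 - β) := by
    ext k l
    rw [hd]
    split_ifs with h
    · simp [h, hβ1 k]
    · rw [Pi.smul_apply, Pi.sub_apply, Pi.single_eq_of_ne h, zero_sub, smul_eq_mul]
      field_simp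
  have hc : ∀ k ∈ {k | k ≠ j}, (1 - β k)⁻¹ ≠ 0 := fun k _ ↦ inv_ne_zero (hβ1 k)
  have hindep := linearIndepOn_smul_of_ne_zero (linearIndepOn_single_sub_ne hβj) hc
  refine ⟨?_, hindep⟩
  rw [span_image_smul_of_ne_zero hc, span_single_sub_image_ne hβsum hβj]
  ext x
  exact mem_sumZeroSubmodule

/-- For every `j ∈ {1,…,J}`, the `J−1` vectors `{d_k : k ≠ j}` span the
hyperplane `H := {x ∈ ℝ^J : Σ_i x_i = 0}` (and, being linearly independent, they form a
basis of `H`). -/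
theorem gps_directions_span_hyperplane
    (J : ℕ) (hJ : 2 ≤ J) (β : Fin J → ℝ)
    (hβ : ∀ i, 0 < β i ∧ β i < 1) (hβsum : ∑ i, β i = 1)
    (d : Fin J → Fin J → ℝ)
    (hd : ∀ i j, d i j = if j = i then 1 else -(β j) / (1 - β i))
    (j : Fin J) :
    (Submodule.span ℝ (d '' {k | k ≠ j}) : Set (Fin J → ℝ))
        = {x : Fin J → ℝ | ∑ i, x i = 0} ∧
    LinearIndependent ℝ (fun k : {k : Fin J // k ≠ j} => d k) :=
  gps_directions_span_hyperplane_general J β hβ hβsum d hd j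
end

section
/- The hyperplane H satisfies H = ⋃_{j∈I} C_j, where for each j ∈ I the cone C_j is defined by C_j := {Σ_{k∈I, k≠j} θ_k d_k : θ_k ≥ 0 for all k ≠ j}. -/
/-! Since `(1 - β k) • d k = e k - β`, every `x` with `∑ x = 0` is `∑ k, (1 - β k) * t k • d k`
for `t = x - c • β`, whatever the constant `c`. Taking `c = min_i x i / β i` makes `t ≥ 0` and
kills the coefficient of a minimising index `j`, so `x` lies in the cone `C_j`. Conversely every
`d k` has coordinate sum `0`, hence so does every point of every cone. -/

open Finset

section GPSDirection

variable {ι : Type*} [DecidableEq ι] (β : ι → ℝ)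

noncomputable def gpsDirection (i : ι) : ι → ℝ :=
  fun j => if j = i then 1 else -β j / (1 - β i)

variable {β}

theorem one_sub_smul_gpsDirection {k : ι} (hk : β k ≠ 1) :
    (1 - β k) • gpsDirection β k = Pi.single k 1 - β := by
  have hk' : 1 - β k ≠ 0 := sub_ne_zero.mpr hk.symm
  ext m
  by_cases hm : m = k
  · subst hm
    simp [gpsDirection]
  · simp [gpsDirection, hm, mul_div_cancel₀ _ hk']

variable [Fintype ι]

theorem sum_gpsDirection (hβsum : ∑ i, β i = 1) {k : ι} (hk : β k ≠ 1) :
    ∑ m, gpsDirection β k m = 0 := by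
  have hk' : 1 - β k ≠ 0 := sub_ne_zero.mpr hk.symm
  have h := congrArg (fun v : ι → ℝ => ∑ m, v m) (one_sub_smul_gpsDirection hk)
  simp only [Pi.smul_apply, smul_eq_mul, ← mul_sum, Pi.sub_apply, sum_sub_distrib,
    sum_pi_single', mem_univ, if_true, hβsum, sub_self] at h
  exact (mul_eq_zero.mp h).resolve_left hk'

theorem sum_apply_sum_smul_gpsDirection (hβsum : ∑ i, β i = 1) (hβ : ∀ i, β i ≠ 1)
    (s : Finset ι) (θ : ι → ℝ) : ∑ i, (∑ k ∈ s, θ k • gpsDirection β k) i = 0 := by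
  simp only [Finset.sum_apply, Pi.smul_apply, smul_eq_mul]
  rw [sum_comm]
  exact sum_eq_zero fun k _ => by rw [← mul_sum, sum_gpsDirection hβsum (hβ k), mul_zero]

theorem sum_smul_single_sub (t v : ι → ℝ) :
    ∑ k, t k • (Pi.single k 1 - v) = t - (∑ k, t k) • v := by
  ext m
  simp [Finset.sum_apply, mul_sub, sum_sub_distrib, Pi.single_apply, sum_mul]

theorem eq_sum_smul_gpsDirection (hβsum : ∑ i, β i = 1) (hβ : ∀ i, β i ≠ 1)
    {x : ι → ℝ} (hx : ∑ i, x i = 0) (c : ℝ) :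
    x = ∑ k, ((1 - β k) * (x k - c * β k)) • gpsDirection β k := by
  simp_rw [mul_comm (1 - β _), mul_smul, one_sub_smul_gpsDirection (hβ _)]
  rw [sum_smul_single_sub]
  simp only [sum_sub_distrib, hx, ← mul_sum, hβsum]
  ext m
  simp

end GPSDirection

theorem exists_forall_div_mul_le {ι : Type*} [Fintype ι] [Nonempty ι] {β : ι → ℝ}
    (hβ : ∀ i, 0 < β i) (x : ι → ℝ) : ∃ j, ∀ i, x j / β j * β i ≤ x i := by
  obtain ⟨j, -, hj⟩ := exists_min_image univ (fun i => x i / β i) univ_nonempty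
  exact ⟨j, fun i => (le_div_iff₀ (hβ i)).mp (hj i (mem_univ i))⟩

theorem gps_hyperplane_eq_union_of_cones_general
    (J : ℕ) (β : Fin J → ℝ)
    (hβ : ∀ i, 0 < β i ∧ β i < 1) (hβsum : ∑ i, β i = 1)
    (d : Fin J → Fin J → ℝ)
    (hd : ∀ i j, d i j = if j = i then 1 else -(β j) / (1 - β i)) :
    {x : Fin J → ℝ | ∑ i, x i = 0}
      = ⋃ j : Fin J,
          {w : Fin J → ℝ | ∃ θ : Fin J → ℝ, (∀ k, k ≠ j → 0 ≤ θ k) ∧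
            w = ∑ k ∈ Finset.univ.erase j, θ k • d k} := by
  obtain rfl : d = gpsDirection β := funext fun i => funext (hd i)
  have hβ_ne_one : ∀ i, β i ≠ 1 := fun i => (hβ i).2.ne
  have : Nonempty (Fin J) := by
    by_contra h
    simp [not_nonempty_iff.mp h] at hβsum
  ext x
  simp only [Set.mem_ofPred_eq, Set.mem_iUnion]
  constructor
  · intro hx
    obtain ⟨j, hj⟩ := exists_forall_div_mul_le (fun i => (hβ i).1) x
    refine ⟨j, fun k => (1 - β k) * (x k - x j / β j * β k),
      fun k _ => mul_nonneg (sub_nonneg.mpr (hβ k).2.le) (sub_nonneg.mpr (hj k)), ?_⟩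
    rw [sum_erase _ (by simp [div_mul_cancel₀ _ (hβ j).1.ne'])]
    exact eq_sum_smul_gpsDirection hβsum hβ_ne_one hx _
  · rintro ⟨j, θ, -, rfl⟩
    exact sum_apply_sum_smul_gpsDirection hβsum hβ_ne_one _ θ

/-- The hyperplane `H = {x : Σ_i x_i = 0}` equals the union over `j` of the
cones `C_j = {Σ_{k≠j} θ_k d_k : θ_k ≥ 0 for all k ≠ j}`. -/
theorem gps_hyperplane_eq_union_of_cones
    (J : ℕ) (hJ : 2 ≤ J) (β : Fin J → ℝ)
    (hβ : ∀ i, 0 < β i ∧ β i < 1) (hβsum : ∑ i, β i = 1)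
    (d : Fin J → Fin J → ℝ)
    (hd : ∀ i j, d i j = if j = i then 1 else -(β j) / (1 - β i)) :
    {x : Fin J → ℝ | ∑ i, x i = 0}
      = ⋃ j : Fin J,
          {w : Fin J → ℝ | ∃ θ : Fin J → ℝ, (∀ k, k ≠ j → 0 ≤ θ k) ∧
            w = ∑ k ∈ Finset.univ.erase j, θ k • d k} :=
  gps_hyperplane_eq_union_of_cones_general J β hβ hβsum d hd
end

section
/- For every w ∈ H there exists a unique vector θ ∈ ℝ_+^J such that θ_j = 0 for at least one j ∈ I and w = Σ_{j∈I} θ_j d_j. -/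
/-!
Writing `c k = θ k / (1 - β k)`, the combination `∑ k, θ k • d k` equals `c - (∑ k, c k) • β`.
So `w = ∑ k, θ k • d k` forces `c = w + T • β` with `T = ∑ k, c k`, and conversely every such `c`
is a solution when `∑ k, w k = 0`. The side conditions say that `T` is the least shift making
`w + T • β` nonnegative, i.e. `T = max_k (-w k / β k)`, which pins down `c` and hence `θ`.
-/

open Finset

variable {ι : Type*} [Fintype ι]

theorem existsUnique_add_mul_nonneg_and_eq_zero [Nonempty ι] {β : ι → ℝ} (hβ : ∀ i, 0 < β i)
    (w : ι → ℝ) : ∃! T : ℝ, (∀ k, 0 ≤ w k + T * β k) ∧ ∃ k, w k + T * β k = 0 := by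
  obtain ⟨j, -, hj⟩ := exists_max_image univ (fun k => -w k / β k) univ_nonempty
  have hzero : w j + -w j / β j * β j = 0 := by
    rw [div_mul_cancel₀ _ (hβ j).ne']
    ring
  have hnonneg (k : ι) : 0 ≤ w k + -w j / β j * β k := by
    have := (div_le_iff₀ (hβ k)).mp (hj k (mem_univ k))
    linarith
  refine ⟨-w j / β j, ⟨hnonneg, j, hzero⟩, fun T ⟨hT, k, hk⟩ => le_antisymm ?_ ?_⟩
  · nlinarith [hnonneg k, hβ k]
  · nlinarith [hT j, hβ j]

theorem existsUnique_nonneg_eq_sub_sum_smul {β w : ι → ℝ} (hβ : ∀ i, 0 < β i)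
    (hβsum : ∑ i, β i = 1) (hw : ∑ i, w i = 0) :
    ∃! c : ι → ℝ, (∀ k, 0 ≤ c k) ∧ (∃ k, c k = 0) ∧ w = c - (∑ k, c k) • β := by
  have : Nonempty ι := by
    by_contra h
    rw [not_nonempty_iff] at h
    simp at hβsum
  obtain ⟨T, ⟨hT, hTzero⟩, hTuniq⟩ := existsUnique_add_mul_nonneg_and_eq_zero hβ w
  have hsum : ∑ k, (w k + T * β k) = T := by
    rw [sum_add_distrib, hw, ← mul_sum, hβsum, zero_add, mul_one]
  refine ⟨w + T • β, ⟨hT, hTzero, ?_⟩, fun c ⟨hc, hczero, hcw⟩ => ?_⟩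
  · ext k
    simp [hsum]
  · have hc_eq (k : ι) : c k = w k + (∑ i, c i) * β k := by
      rw [hcw]
      simp
    have hcT : ∑ i, c i = T := hTuniq _
      ⟨fun k => hc_eq k ▸ hc k, hczero.imp fun k hk => hc_eq k ▸ hk⟩
    ext k
    rw [hc_eq k, hcT]
    simp

theorem sum_smul_eq_sub_sum_smul [DecidableEq ι] {β : ι → ℝ} (hβ : ∀ i, β i ≠ 1)
    {d : ι → ι → ℝ} (hd : ∀ i j, d i j = if j = i then 1 else -(β j) / (1 - β i))
    (θ : ι → ℝ) :
    ∑ k, θ k • d k = (fun k => θ k / (1 - β k)) - (∑ k, θ k / (1 - β k)) • β := by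
  ext j
  have hterm (k : ι) : θ k * d k j
      = (if j = k then θ k / (1 - β k) else 0) - θ k / (1 - β k) * β j := by
    have : 1 - β k ≠ 0 := sub_ne_zero.mpr (hβ k).symm
    rw [hd]
    split_ifs with h
    · subst h
      field_simp
    · field_simp
      ring
  simp only [Finset.sum_apply, Pi.smul_apply, smul_eq_mul, Pi.sub_apply, hterm, sum_sub_distrib,
    sum_ite_eq, mem_univ, if_true, ← sum_mul]

theorem gps_unique_nonneg_representation_general
    (J : ℕ) (β : Fin J → ℝ)
    (hβ : ∀ i, 0 < β i ∧ β i < 1) (hβsum : ∑ i, β i = 1)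
    (d : Fin J → Fin J → ℝ)
    (hd : ∀ i j, d i j = if j = i then 1 else -(β j) / (1 - β i))
    (w : Fin J → ℝ) (hw : ∑ i, w i = 0) :
    ∃! θ : Fin J → ℝ, (∀ k, 0 ≤ θ k) ∧ (∃ k, θ k = 0) ∧ w = ∑ k, θ k • d k := by
  have hpos (k : Fin J) : 0 < 1 - β k := sub_pos.mpr (hβ k).2
  let e : (Fin J → ℝ) ≃ (Fin J → ℝ) :=
    Equiv.piCongrRight fun k => Equiv.divRight₀ (1 - β k) (hpos k).ne'
  refine (e.existsUnique_congr fun θ => ?_).mpr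
    (existsUnique_nonneg_eq_sub_sum_smul (fun i => (hβ i).1) hβsum hw)
  rw [show e θ = fun k => θ k / (1 - β k) from rfl,
    sum_smul_eq_sub_sum_smul (fun i => (hβ i).2.ne) hd]
  refine and_congr (forall_congr' fun k => ?_) (and_congr (exists_congr fun k => ?_) Iff.rfl)
  · rw [le_div_iff₀ (hpos k), zero_mul]
  · exact (div_eq_zero_iff.trans (or_iff_left (hpos k).ne')).symm

/-- For every `w ∈ H` there is a unique `θ ∈ ℝ_+^J` with `θ_j = 0` for at
least one `j` and `w = Σ_j θ_j d_j`. -/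
theorem gps_unique_nonneg_representation
    (J : ℕ) (hJ : 2 ≤ J) (β : Fin J → ℝ)
    (hβ : ∀ i, 0 < β i ∧ β i < 1) (hβsum : ∑ i, β i = 1)
    (d : Fin J → Fin J → ℝ)
    (hd : ∀ i j, d i j = if j = i then 1 else -(β j) / (1 - β i))
    (w : Fin J → ℝ) (hw : ∑ i, w i = 0) :
    ∃! θ : Fin J → ℝ, (∀ k, 0 ≤ θ k) ∧ (∃ k, θ k = 0) ∧ w = ∑ k, θ k • d k :=
  gps_unique_nonneg_representation_general J β hβ hβsum d hd w hw
end

section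
/- Let w ∈ ℝ^J and suppose θ, θ̃ ∈ ℝ_+^{J+1} satisfy w = Σ_{k=1}^{J+1} θ_k d_k = Σ_{k=1}^{J+1} θ̃_k d_k, with {k ∈ I : θ_k > 0} ≠ I and {k ∈ I : θ̃_k > 0} ≠ I. Then θ = θ̃. Moreover, θ_{J+1} = ⟨w, d_{J+1}⟩ (the Euclidean inner product), so θ_{J+1} > 0 if and only if Σ_{i∈I} w_i > 0. -/
/-! Since `d_i = (1 - β_i)⁻¹ • (e_i - β)`, a combination `∑ θ_k d_k` equals `ψ - (∑ ψ_k) • β` with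
`ψ_k = θ_k / (1 - β_k)`. Its coordinates sum to zero because `∑ β = 1`, so `∑ w_i = θ_{J+1} √J`.
Two representations then give `ψ - s • β = ψ' - s' • β`: a coordinate where `ψ` vanishes forces
`s ≤ s'`, one where `ψ'` vanishes forces `s' ≤ s`, hence `ψ = ψ'`. -/

open Finset

namespace GPS

variable {ι : Type*}

lemma eq_of_sub_smul_eq_sub_smul {β ψ ψ' : ι → ℝ} {s s' : ℝ} (hβ : ∀ i, 0 < β i)
    (hψ : ∀ i, 0 ≤ ψ i) (hψ' : ∀ i, 0 ≤ ψ' i) (hzero : ∃ i, ψ i = 0) (hzero' : ∃ i, ψ' i = 0)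
    (h : ψ - s • β = ψ' - s' • β) : ψ = ψ' := by
  have key (i : ι) : ψ i - s * β i = ψ' i - s' * β i := by simpa using congrFun h i
  obtain ⟨i, hi⟩ := hzero
  obtain ⟨i', hi'⟩ := hzero'
  have hss' : s = s' := le_antisymm
    (by nlinarith [key i, hi, hψ' i, hβ i]) (by nlinarith [key i', hi', hψ i', hβ i'])
  rw [hss'] at h
  exact sub_left_injective h

variable [DecidableEq ι]

noncomputable def dir (β : ι → ℝ) (i : ι) : ι → ℝ :=
  fun j => if j = i then 1 else -β j / (1 - β i)

variable {β : ι → ℝ}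

lemma dir_eq_smul {i : ι} (hβi : β i ≠ 1) :
    dir β i = (1 - β i)⁻¹ • (Pi.single i 1 - β) := by
  have : 1 - β i ≠ 0 := sub_ne_zero.2 hβi.symm
  ext j
  rcases eq_or_ne j i with rfl | hji
  · simp [dir, this]
  · simp [dir, hji, div_eq_inv_mul]

variable [Fintype ι]

lemma sum_smul_dir (hβ : ∀ i, β i ≠ 1) (φ : ι → ℝ) :
    ∑ k, φ k • dir β k = (fun k => φ k / (1 - β k)) - (∑ k, φ k / (1 - β k)) • β := by
  simp_rw [dir_eq_smul (hβ _), smul_smul, smul_sub, sum_sub_distrib, ← sum_smul]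
  congr 1
  ext j
  simp [Finset.sum_apply, Pi.single_apply, div_eq_mul_inv]

lemma sum_apply_sum_smul_dir (hβ : ∀ i, β i ≠ 1) (hβsum : ∑ i, β i = 1) (φ : ι → ℝ) :
    ∑ j, (∑ k, φ k • dir β k) j = 0 := by
  rw [sum_smul_dir hβ]
  simp [sum_sub_distrib, ← mul_sum, hβsum]

lemma eq_of_sum_smul_dir_eq {θ θ' : ι → ℝ} (hβ : ∀ i, 0 < β i ∧ β i < 1)
    (hθ : ∀ k, 0 ≤ θ k) (hθ' : ∀ k, 0 ≤ θ' k) (hzero : ∃ k, θ k = 0) (hzero' : ∃ k, θ' k = 0)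
    (h : ∑ k, θ k • dir β k = ∑ k, θ' k • dir β k) : θ = θ' := by
  have hβ1 (i : ι) : 0 < 1 - β i := sub_pos.2 (hβ i).2
  rw [sum_smul_dir (fun i => (hβ i).2.ne), sum_smul_dir (fun i => (hβ i).2.ne)] at h
  have hscaled := eq_of_sub_smul_eq_sub_smul (fun i => (hβ i).1)
    (fun k => div_nonneg (hθ k) (hβ1 k).le) (fun k => div_nonneg (hθ' k) (hβ1 k).le)
    (hzero.imp fun k hk => by simp [hk]) (hzero'.imp fun k hk => by simp [hk]) h
  ext k
  exact (div_left_inj' (hβ1 k).ne').1 (congrFun hscaled k)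

end GPS

open GPS in
theorem gps_unique_representation_with_dlast_general
    (J : ℕ) (β : Fin J → ℝ)
    (hβ : ∀ i, 0 < β i ∧ β i < 1) (hβsum : ∑ i, β i = 1)
    (d : Fin J → Fin J → ℝ)
    (hd : ∀ i j, d i j = if j = i then 1 else -(β j) / (1 - β i))
    (dlast : Fin J → ℝ) (hdlast : ∀ i, dlast i = (Real.sqrt J)⁻¹)
    (w : Fin J → ℝ) (θ θ' : Fin J → ℝ) (t t' : ℝ)
    (hθ : ∀ k, 0 ≤ θ k)
    (hθ' : ∀ k, 0 ≤ θ' k)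
    (hrep : w = (∑ k, θ k • d k) + t • dlast)
    (hrep' : w = (∑ k, θ' k • d k) + t' • dlast)
    (hsupp : {k : Fin J | 0 < θ k} ≠ Set.univ)
    (hsupp' : {k : Fin J | 0 < θ' k} ≠ Set.univ) :
    θ = θ' ∧ t = t' ∧
    t = ∑ i, w i * dlast i ∧
    (0 < t ↔ 0 < ∑ i, w i) := by
  obtain rfl : d = dir β := funext₂ hd
  obtain rfl : dlast = fun _ => (Real.sqrt J)⁻¹ := funext hdlast
  have zero_of_supp_ne {φ : Fin J → ℝ} (hφ : ∀ k, 0 ≤ φ k)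
      (hsupp : {k | 0 < φ k} ≠ Set.univ) : ∃ k, φ k = 0 := by
    obtain ⟨k, hk⟩ := (Set.ne_univ_iff_exists_notMem _).1 hsupp
    exact ⟨k, le_antisymm (not_lt.1 hk) (hφ k)⟩
  obtain ⟨k₀, -⟩ := zero_of_supp_ne hθ hsupp
  have hsqrt : 0 < Real.sqrt J := Real.sqrt_pos.2 (Nat.cast_pos.2 k₀.pos)
  have sum_w {φ : Fin J → ℝ} {s : ℝ} (h : w = ∑ k, φ k • dir β k + s • fun _ => (Real.sqrt J)⁻¹) :
      ∑ i, w i = s * Real.sqrt J := by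
    simp only [h, Pi.add_apply, sum_add_distrib, sum_apply_sum_smul_dir (fun i => (hβ i).2.ne) hβsum,
      Pi.smul_apply, smul_eq_mul, sum_const, card_univ, Fintype.card_fin, nsmul_eq_mul, zero_add]
    rw [mul_left_comm, ← div_eq_mul_inv, Real.div_sqrt]
  have htt' : t = t' := mul_right_cancel₀ hsqrt.ne' ((sum_w hrep).symm.trans (sum_w hrep'))
  subst htt'
  refine ⟨eq_of_sum_smul_dir_eq hβ hθ hθ' (zero_of_supp_ne hθ hsupp)
    (zero_of_supp_ne hθ' hsupp') (add_right_cancel (hrep.symm.trans hrep')), rfl, ?_, ?_⟩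
  · rw [← sum_mul, sum_w hrep, mul_inv_cancel_right₀ hsqrt.ne']
  · rw [sum_w hrep, mul_pos_iff_of_pos_right hsqrt]

/-- uniqueness of the nonnegative representation
`w = Σ_{k=1}^{J} θ_k d_k + θ_{J+1} d_{J+1}` when the support of `(θ_k)_{k∈I}` is not all
of `I`, together with `θ_{J+1} = ⟨w, d_{J+1}⟩` and `θ_{J+1} > 0 ↔ Σ_i w_i > 0`. -/
theorem gps_unique_representation_with_dlast
    (J : ℕ) (hJ : 2 ≤ J) (β : Fin J → ℝ)
    (hβ : ∀ i, 0 < β i ∧ β i < 1) (hβsum : ∑ i, β i = 1)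
    (d : Fin J → Fin J → ℝ)
    (hd : ∀ i j, d i j = if j = i then 1 else -(β j) / (1 - β i))
    (dlast : Fin J → ℝ) (hdlast : ∀ i, dlast i = (Real.sqrt J)⁻¹)
    (w : Fin J → ℝ) (θ θ' : Fin J → ℝ) (t t' : ℝ)
    (hθ : ∀ k, 0 ≤ θ k) (ht : 0 ≤ t)
    (hθ' : ∀ k, 0 ≤ θ' k) (ht' : 0 ≤ t')
    (hrep : w = (∑ k, θ k • d k) + t • dlast)
    (hrep' : w = (∑ k, θ' k • d k) + t' • dlast)
    (hsupp : {k : Fin J | 0 < θ k} ≠ Set.univ)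
    (hsupp' : {k : Fin J | 0 < θ' k} ≠ Set.univ) :
    θ = θ' ∧ t = t' ∧
    t = ∑ i, w i * dlast i ∧
    (0 < t ↔ 0 < ∑ i, w i) :=
  gps_unique_representation_with_dlast_general J β hβ hβsum d hd dlast hdlast w θ θ' t t' hθ hθ'
    hrep hrep' hsupp hsupp'
end

section
/- Comparison principle for the GPS projection: let ν̃, ν ∈ ℝ^J with ν̃_i ≤ ν_i for every i ∈ I, let κ̃ ∈ ℝ_+^J be a GPS projection of ν̃ and let κ ∈ ℝ_+^J be a GPS projection of ν. Then κ̃_i ≤ κ_i for every i ∈ I. -/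
/-- The GPS direction of constraint `d_i = e_i − Σ_{j≠i} (β_j/(1−β_i)) e_j`. -/
noncomputable def gpsD {J : ℕ} (β : Fin J → ℝ) (i : Fin J) : Fin J → ℝ :=
  fun j => if j = i then 1 else -(β j) / (1 - β i)

/-- The extra direction `d_{J+1} = (1/√J) Σ_i e_i`. -/
noncomputable def gpsDlast (J : ℕ) : Fin J → ℝ := fun _ => (Real.sqrt J)⁻¹

/-- The set `d(x)` of allowable directions of constraint at `x ∈ ℝ_+^J`:
nonnegative combinations of the `d_i` with `i ∈ I(x) = {i : x_i = 0}`, where `d_{J+1}`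
is also allowed when `x = 0`. -/
noncomputable def gpsDirSet {J : ℕ} (β : Fin J → ℝ) (x : Fin J → ℝ) :
    Set (Fin J → ℝ) :=
  {w | (x = 0 ∧ ∃ a : Fin J → ℝ, ∃ b : ℝ, (∀ i, 0 ≤ a i) ∧ 0 ≤ b ∧
          w = (∑ i, a i • gpsD β i) + b • gpsDlast J) ∨
       (x ≠ 0 ∧ ∃ a : Fin J → ℝ, (∀ i, 0 ≤ a i) ∧ (∀ i, x i ≠ 0 → a i = 0) ∧
          w = ∑ i, a i • gpsD β i)}

/-- `κ ∈ ℝ_+^J` is a GPS projection of `ν ∈ ℝ^J` if either `ν ∈ ℝ_+^J` and `κ = ν`, or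
`ν ∉ ℝ_+^J`, `κ` lies on the boundary of `ℝ_+^J`, and `κ − ν ∈ d(κ)`. -/
noncomputable def IsGPSProj {J : ℕ} (β : Fin J → ℝ) (ν κ : Fin J → ℝ) : Prop :=
  (∀ i, 0 ≤ κ i) ∧
  (((∀ i, 0 ≤ ν i) ∧ κ = ν) ∨
   ((¬ ∀ i, 0 ≤ ν i) ∧ (∃ i, κ i = 0) ∧ (κ - ν) ∈ gpsDirSet β κ))


/-!
Write `κ − ν = Σ_j a_j d_j + B 𝟙` with `u_j := a_j / (1 − β_j) ≥ 0` supported on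
`{κ_j = 0}`, so that `κ = ν + u − (Σ_j u_j) β + B 𝟙`, and similarly for `κ̃`.
If `κ̃_i > κ_i ≥ 0` at some `i`, then `κ̃ ≠ 0` and `ũ_i = 0`, and the `i`-th equation
forces `u_i < β_i D` with `D := Σ u − Σ ũ > 0`. At every `j` with `u_j > ũ_j` we have
`κ_j = 0`, and the `j`-th equations give `u_j − ũ_j ≤ β_j D`. Summing over `j ≠ i` yields
`D − u_i ≤ (1 − β_i) D`, i.e. `β_i D ≤ u_i`, a contradiction.
-/

open Finset

section Decomposition

variable {ι : Type*} [Fintype ι]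

structure IsGPSDecomposition (β ν κ u : ι → ℝ) (B : ℝ) : Prop where
  nonneg : 0 ≤ κ
  push_nonneg : 0 ≤ u
  push_eq_zero : ∀ i, κ i ≠ 0 → u i = 0
  lift_nonneg : 0 ≤ B
  lift_eq_zero : κ ≠ 0 → B = 0
  eq : ∀ i, κ i = ν i + u i - β i * ∑ j, u j + B

variable {β ν ν' κ κ' u u' : ι → ℝ} {B : ℝ}

lemma IsGPSDecomposition.push_sub_le (h : IsGPSDecomposition β ν κ u B) {j : ι}
    (hβ : 0 ≤ β j) (hsum : ∑ k, u' k ≤ ∑ k, u k) (hκ' : 0 ≤ κ' j) (hu' : 0 ≤ u' j)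
    (heq' : κ' j = ν' j + u' j - β j * ∑ k, u' k) (hle : ν' j ≤ ν j) :
    u j - u' j ≤ β j * (∑ k, u k - ∑ k, u' k) := by
  by_cases hu : u j ≤ u' j
  · exact (sub_nonpos.2 hu).trans (mul_nonneg hβ (sub_nonneg.2 hsum))
  · have hκ : κ j = 0 := by
      by_contra hκ
      exact hu (by simpa [h.push_eq_zero j hκ] using hu')
    have := h.eq j
    linarith [h.lift_nonneg]

theorem IsGPSDecomposition.le_of_le (h' : IsGPSDecomposition β ν' κ' u' B')
    (h : IsGPSDecomposition β ν κ u B) (hβ : 0 ≤ β) (hβsum : ∑ i, β i ≤ 1) (hle : ν' ≤ ν) :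
    κ' ≤ κ := by
  classical
  intro i
  by_contra! hlt
  have hκ'i : 0 < κ' i := (h.nonneg i).trans_lt hlt
  have hB' : B' = 0 := h'.lift_eq_zero fun h0 => by simp [h0] at hκ'i
  have hu'i : u' i = 0 := h'.push_eq_zero i hκ'i.ne'
  set D := ∑ k, u k - ∑ k, u' k
  have hgap : u i < β i * D := by
    have := h.eq i
    have := h'.eq i
    linarith [h.lift_nonneg, hle i]
  have hD : 0 < D := pos_of_mul_pos_right ((h.push_nonneg i).trans_lt hgap) (hβ i)
  have hbound : D - u i ≤ (1 - β i) * D :=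
    calc D - u i = ∑ j ∈ univ.erase i, (u j - u' j) := by
          rw [sum_sub_distrib, sum_erase_eq_sub (mem_univ i), sum_erase_eq_sub (mem_univ i),
            hu'i]
          ring
      _ ≤ ∑ j ∈ univ.erase i, β j * D :=
          sum_le_sum fun j _ => h.push_sub_le (hβ j) (sub_nonneg.1 hD.le) (h'.nonneg j)
            (h'.push_nonneg j) (by simpa [hB'] using h'.eq j) (hle j)
      _ = (∑ j, β j - β i) * D := by rw [← sum_mul, sum_erase_eq_sub (mem_univ i)]
      _ ≤ (1 - β i) * D := by gcongr
  linarith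

end Decomposition

lemma sum_smul_gpsD_apply {J : ℕ} {β : Fin J → ℝ} (hβ : ∀ i, β i ≠ 1) (a : Fin J → ℝ)
    (i : Fin J) :
    (∑ j, a j • gpsD β j) i = a i / (1 - β i) - β i * ∑ j, a j / (1 - β j) := by
  have hβ' : ∀ j, 1 - β j ≠ 0 := fun j => sub_ne_zero.2 (hβ j).symm
  have hterm : ∀ j, a j * gpsD β j i
      = (if i = j then a i / (1 - β i) else 0) - β i * (a j / (1 - β j)) := by
    intro j
    by_cases hij : i = j
    · subst hij
      simp only [gpsD, if_true]
      field_simp [hβ' i]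
    · simp only [gpsD, if_neg hij]
      field_simp [hβ' j]
      ring
  simp only [Finset.sum_apply, Pi.smul_apply, smul_eq_mul, hterm, sum_sub_distrib, sum_ite_eq,
    mem_univ, if_true, mul_sum]

lemma IsGPSProj.exists_isGPSDecomposition {J : ℕ} {β ν κ : Fin J → ℝ} (hβ : ∀ i, β i < 1)
    (h : IsGPSProj β ν κ) : ∃ u B, IsGPSDecomposition β ν κ u B := by
  obtain ⟨hκ, ⟨-, rfl⟩ | ⟨-, -, ⟨rfl, a, b, ha, hb, hdir⟩ | ⟨-, a, ha, hsupp, hdir⟩⟩⟩ := h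
  · exact ⟨0, 0, hκ, le_rfl, fun _ _ => rfl, le_rfl, fun _ => rfl, by simp⟩
  · refine ⟨fun j => a j / (1 - β j), b * (Real.sqrt J)⁻¹, hκ, fun j => ?_,
      fun j hj => absurd rfl hj, by positivity, fun h0 => absurd rfl h0, fun i => ?_⟩
    · exact div_nonneg (ha j) (sub_nonneg.2 (hβ j).le)
    · have := congrFun hdir i
      simp only [Pi.sub_apply, Pi.add_apply, sum_smul_gpsD_apply (fun j => (hβ j).ne) a i,
        Pi.smul_apply, gpsDlast, smul_eq_mul] at this
      linarith
  · refine ⟨fun j => a j / (1 - β j), 0, hκ, fun j => ?_, fun j hj => by simp [hsupp j hj],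
      le_rfl, fun _ => rfl, fun i => ?_⟩
    · exact div_nonneg (ha j) (sub_nonneg.2 (hβ j).le)
    · have := congrFun hdir i
      simp only [Pi.sub_apply, sum_smul_gpsD_apply (fun j => (hβ j).ne) a i] at this
      linarith

theorem gps_projection_comparison_general
    (J : ℕ) (β : Fin J → ℝ)
    (hβ : ∀ i, 0 < β i ∧ β i < 1) (hβsum : ∑ i, β i = 1)
    (ν' ν κ' κ : Fin J → ℝ) (hle : ∀ i, ν' i ≤ ν i)
    (hproj' : IsGPSProj β ν' κ') (hproj : IsGPSProj β ν κ) :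
    ∀ i, κ' i ≤ κ i := by
  obtain ⟨u', B', h'⟩ := hproj'.exists_isGPSDecomposition fun i => (hβ i).2
  obtain ⟨u, B, h⟩ := hproj.exists_isGPSDecomposition fun i => (hβ i).2
  exact h'.le_of_le h (fun i => (hβ i).1.le) hβsum.le hle

/-- comparison principle for the GPS projection: if `ν̃ ≤ ν`
componentwise, `κ̃` is a GPS projection of `ν̃` and `κ` is a GPS projection of `ν`,
then `κ̃ ≤ κ` componentwise. -/
theorem gps_projection_comparison
    (J : ℕ) (hJ : 2 ≤ J) (β : Fin J → ℝ)
    (hβ : ∀ i, 0 < β i ∧ β i < 1) (hβsum : ∑ i, β i = 1)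
    (ν' ν κ' κ : Fin J → ℝ) (hle : ∀ i, ν' i ≤ ν i)
    (hproj' : IsGPSProj β ν' κ') (hproj : IsGPSProj β ν κ) :
    ∀ i, κ' i ≤ κ i :=
  gps_projection_comparison_general J β hβ hβsum ν' ν κ' κ hle hproj' hproj
end

section
/- If κ ∈ ℝ_+^J is a GPS projection of ν ∈ ℝ^J, then Σ_{j∈I} κ_j = max(Σ_{j∈I} ν_j, 0). In particular, if Σ_{j∈I} ν_j ≤ 0 and ν ∉ ℝ_+^J, then every GPS projection of ν equals 0. -/
open Finset

lemma sum_apply_sum_smul {ι κ : Type*} [Fintype ι] [Fintype κ] (a : ι → ℝ) (v : ι → κ → ℝ) :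
    ∑ j, (∑ i, a i • v i) j = ∑ i, a i * ∑ j, v i j := by
  simp only [Finset.sum_apply, Pi.smul_apply, smul_eq_mul, mul_sum]
  exact sum_comm

section

variable {J : ℕ} {β : Fin J → ℝ}

lemma sum_gpsD (hβ : ∀ i, β i ≠ 1) (hβsum : ∑ i, β i = 1) (i : Fin J) :
    ∑ j, gpsD β i j = 0 := by
  have hne : 1 - β i ≠ 0 := sub_ne_zero.mpr (hβ i).symm
  have hrest : ∑ j ∈ univ.erase i, β j = 1 - β i := by
    rw [← hβsum, ← sum_erase_add univ β (mem_univ i), add_sub_cancel_right]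
  have hoff : ∑ j ∈ univ.erase i, gpsD β i j = -1 := by
    rw [sum_congr rfl fun j hj => by rw [gpsD, if_neg (ne_of_mem_erase hj)]]
    rw [← sum_div, sum_neg_distrib, hrest, neg_div, div_self hne]
  rw [← sum_erase_add univ _ (mem_univ i), hoff, gpsD, if_pos rfl]
  norm_num

lemma sum_sum_smul_gpsD (hβ : ∀ i, β i ≠ 1) (hβsum : ∑ i, β i = 1) (a : Fin J → ℝ) :
    ∑ j, (∑ i, a i • gpsD β i) j = 0 := by
  rw [sum_apply_sum_smul]
  simp [sum_gpsD hβ hβsum]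

lemma sum_gpsDlast_nonneg (J : ℕ) : 0 ≤ ∑ j, gpsDlast J j := by
  unfold gpsDlast
  positivity

lemma sum_nonneg_of_mem_gpsDirSet (hβ : ∀ i, β i ≠ 1) (hβsum : ∑ i, β i = 1)
    {x w : Fin J → ℝ} (hw : w ∈ gpsDirSet β x) : 0 ≤ ∑ j, w j := by
  rcases hw with ⟨-, a, b, -, hb, rfl⟩ | ⟨-, a, -, -, rfl⟩
  · simp only [Pi.add_apply, Pi.smul_apply, smul_eq_mul, sum_add_distrib,
      ← mul_sum, sum_sum_smul_gpsD hβ hβsum]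
    simpa using mul_nonneg hb (sum_gpsDlast_nonneg J)
  · exact (sum_sum_smul_gpsD hβ hβsum a).ge

lemma sum_eq_zero_of_mem_gpsDirSet (hβ : ∀ i, β i ≠ 1) (hβsum : ∑ i, β i = 1)
    {x w : Fin J → ℝ} (hx : x ≠ 0) (hw : w ∈ gpsDirSet β x) : ∑ j, w j = 0 := by
  rcases hw with ⟨hx0, -⟩ | ⟨-, a, -, -, rfl⟩
  · exact absurd hx0 hx
  · exact sum_sum_smul_gpsD hβ hβsum a

lemma IsGPSProj.sum_eq_max (hβ : ∀ i, β i ≠ 1) (hβsum : ∑ i, β i = 1) {ν κ : Fin J → ℝ}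
    (h : IsGPSProj β ν κ) : ∑ j, κ j = max (∑ j, ν j) 0 := by
  obtain ⟨hκ, ⟨-, rfl⟩ | ⟨-, -, hdir⟩⟩ := h
  · exact (max_eq_left (sum_nonneg fun j _ => hκ j)).symm
  have hshift : ∑ j, (κ - ν) j = ∑ j, κ j - ∑ j, ν j := sum_sub_distrib ..
  by_cases hκ0 : κ = 0
  · have hgain := sum_nonneg_of_mem_gpsDirSet hβ hβsum hdir
    subst hκ0
    simp only [Pi.zero_apply, sum_const_zero] at hshift ⊢
    rw [max_eq_right (by linarith)]
  · have hsum := sum_eq_zero_of_mem_gpsDirSet hβ hβsum hκ0 hdir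
    have hνκ : ∑ j, κ j = ∑ j, ν j := by linarith
    rw [← hνκ, max_eq_left (sum_nonneg fun j _ => hκ j)]

end

theorem gps_projection_sum_general
    (J : ℕ) (β : Fin J → ℝ)
    (hβ : ∀ i, 0 < β i ∧ β i < 1) (hβsum : ∑ i, β i = 1)
    (ν κ : Fin J → ℝ) (hproj : IsGPSProj β ν κ) :
    ∑ j, κ j = max (∑ j, ν j) 0 ∧
    ((∑ j, ν j ≤ 0 ∧ ¬ ∀ i, 0 ≤ ν i) → κ = 0) := by
  have hsum := hproj.sum_eq_max (fun i => (hβ i).2.ne) hβsum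
  refine ⟨hsum, fun ⟨hν, _⟩ => funext fun j => ?_⟩
  rw [max_eq_right hν] at hsum
  exact (sum_eq_zero_iff_of_nonneg fun j _ => hproj.1 j).mp hsum j (mem_univ j)

/-- if `κ` is a GPS projection of `ν`, then `Σ_j κ_j = max(Σ_j ν_j, 0)`;
in particular, if `Σ_j ν_j ≤ 0` and `ν ∉ ℝ_+^J`, then `κ = 0`. -/
theorem gps_projection_sum
    (J : ℕ) (hJ : 2 ≤ J) (β : Fin J → ℝ)
    (hβ : ∀ i, 0 < β i ∧ β i < 1) (hβsum : ∑ i, β i = 1)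
    (ν κ : Fin J → ℝ) (hproj : IsGPSProj β ν κ) :
    ∑ j, κ j = max (∑ j, ν j) 0 ∧
    ((∑ j, ν j ≤ 0 ∧ ¬ ∀ i, 0 ≤ ν i) → κ = 0) :=
  gps_projection_sum_general J β hβ hβsum ν κ hproj
end

section
/- Let ν ∈ ℝ^J with Σ_{j∈I} ν_j ≥ 0. Then there is at most one subset S ⊊ I such that (−Σ_{j∈S} ν_j)/(1 − Σ_{j∈S} β_j) > 0 and such that, for every j ∈ I, ν_j/β_j < (−Σ_{k∈S} ν_k)/(1 − Σ_{k∈S} β_k) if and only if j ∈ S. -/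
/-!
Write `r_S = (−Σ_{S} ν)/(1 − Σ_{S} β)`. Since the sets in question are exactly the sublevel
sets `{j | ν_j/β_j < r_S}`, a smaller rate gives a smaller set: `r_S ≤ r_T` forces `S ⊆ T`.
Conversely, every `j ∈ T \ S` has `ν_j ≥ r_S β_j`, so adding these indices to `S` can only lower
the rate (a mediant inequality), i.e. `r_T ≤ r_S`, and then `T ⊆ S`.
-/

open Finset

namespace GPS

variable {ι : Type*} (β ν : ι → ℝ)

noncomputable def rate (S : Finset ι) : ℝ := (-∑ k ∈ S, ν k) / (1 - ∑ k ∈ S, β k)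

def IsCriticalSet (S : Finset ι) : Prop := ∀ j, ν j / β j < rate β ν S ↔ j ∈ S

variable {β ν}

lemma one_sub_sum_pos_of_ne_univ [Fintype ι] (hβ : ∀ i, 0 < β i) (hβsum : ∑ i, β i = 1)
    {S : Finset ι} (hS : S ≠ univ) : 0 < 1 - ∑ k ∈ S, β k := by
  obtain ⟨i, -, hi⟩ := exists_of_ssubset (ssubset_univ_iff.2 hS)
  have : ∑ k ∈ S, β k < ∑ k, β k :=
    sum_lt_sum_of_subset (subset_univ S) (mem_univ i) hi (hβ i) fun j _ _ => (hβ j).le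
  linarith

lemma IsCriticalSet.subset_of_rate_le {S T : Finset ι} (hS : IsCriticalSet β ν S)
    (hT : IsCriticalSet β ν T) (hle : rate β ν S ≤ rate β ν T) : S ⊆ T :=
  fun j hj => (hT j).1 (((hS j).2 hj).trans_le hle)

lemma IsCriticalSet.rate_mul_le {S : Finset ι} (hβ : ∀ i, 0 < β i) (hS : IsCriticalSet β ν S)
    {j : ι} (hj : j ∉ S) : rate β ν S * β j ≤ ν j :=
  (le_div_iff₀ (hβ j)).1 (not_lt.1 fun h => hj ((hS j).1 h))

lemma rate_le_of_subset {S T : Finset ι} (hST : S ⊆ T) (hdS : 1 - ∑ k ∈ S, β k ≠ 0)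
    (hdT : 0 < 1 - ∑ k ∈ T, β k) (hbound : ∀ j ∈ T, j ∉ S → rate β ν S * β j ≤ ν j) :
    rate β ν T ≤ rate β ν S := by
  classical
  set r := rate β ν S
  have hnumS : -∑ k ∈ S, ν k = r * (1 - ∑ k ∈ S, β k) := by
    simp only [r, rate]
    field_simp
  have hsum : r * ∑ k ∈ T \ S, β k ≤ ∑ k ∈ T \ S, ν k := by
    rw [mul_sum]
    exact sum_le_sum fun j hj => hbound j (mem_sdiff.1 hj).1 (mem_sdiff.1 hj).2
  have hνsplit := sum_sdiff (f := ν) hST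
  have hβsplit := sum_sdiff (f := β) hST
  rw [rate, div_le_iff₀ hdT]
  linear_combination hsum + hnumS - r * hβsplit + hνsplit

lemma IsCriticalSet.eq_of_rate_le [Fintype ι] (hβ : ∀ i, 0 < β i) (hβsum : ∑ i, β i = 1)
    {S T : Finset ι} (hSu : S ≠ univ) (hTu : T ≠ univ) (hS : IsCriticalSet β ν S)
    (hT : IsCriticalSet β ν T) (hle : rate β ν S ≤ rate β ν T) : S = T := by
  have hST := hS.subset_of_rate_le hT hle
  have hTS : rate β ν T ≤ rate β ν S :=
    rate_le_of_subset hST (one_sub_sum_pos_of_ne_univ hβ hβsum hSu).ne'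
      (one_sub_sum_pos_of_ne_univ hβ hβsum hTu)
      fun _ _ hj => hS.rate_mul_le hβ hj
  exact hST.antisymm (hT.subset_of_rate_le hS hTS)

end GPS

open GPS in
theorem gps_subcritical_set_unique_general
    (J : ℕ) (β : Fin J → ℝ)
    (hβ : ∀ i, 0 < β i ∧ β i < 1) (hβsum : ∑ i, β i = 1)
    (ν : Fin J → ℝ) :
    ∀ S T : Finset (Fin J), S ≠ Finset.univ → T ≠ Finset.univ →
      0 < (-∑ j ∈ S, ν j) / (1 - ∑ j ∈ S, β j) →
      0 < (-∑ j ∈ T, ν j) / (1 - ∑ j ∈ T, β j) →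
      (∀ j, ν j / β j < (-∑ k ∈ S, ν k) / (1 - ∑ k ∈ S, β k) ↔ j ∈ S) →
      (∀ j, ν j / β j < (-∑ k ∈ T, ν k) / (1 - ∑ k ∈ T, β k) ↔ j ∈ T) →
      S = T := by
  intro S T hSu hTu _ _ hS hT
  have hβpos i := (hβ i).1
  rcases le_total (rate β ν S) (rate β ν T) with h | h
  · exact IsCriticalSet.eq_of_rate_le hβpos hβsum hSu hTu hS hT h
  · exact (IsCriticalSet.eq_of_rate_le hβpos hβsum hTu hSu hT hS h).symm

/-- if `Σ_j ν_j ≥ 0`, there is at most one subset `S ⊊ I` with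
`r_S = (−Σ_{j∈S} ν_j)/(1 − Σ_{j∈S} β_j) > 0` such that, for every `j`,
`ν_j/β_j < r_S` if and only if `j ∈ S`. -/
theorem gps_subcritical_set_unique
    (J : ℕ) (hJ : 2 ≤ J) (β : Fin J → ℝ)
    (hβ : ∀ i, 0 < β i ∧ β i < 1) (hβsum : ∑ i, β i = 1)
    (ν : Fin J → ℝ) (hν : 0 ≤ ∑ j, ν j) :
    ∀ S T : Finset (Fin J), S ≠ Finset.univ → T ≠ Finset.univ →
      0 < (-∑ j ∈ S, ν j) / (1 - ∑ j ∈ S, β j) →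
      0 < (-∑ j ∈ T, ν j) / (1 - ∑ j ∈ T, β j) →
      (∀ j, ν j / β j < (-∑ k ∈ S, ν k) / (1 - ∑ k ∈ S, β k) ↔ j ∈ S) →
      (∀ j, ν j / β j < (-∑ k ∈ T, ν k) / (1 - ∑ k ∈ T, β k) ↔ j ∈ T) →
      S = T :=
  gps_subcritical_set_unique_general J β hβ hβsum ν
end

section
/- Let ν ∈ ℝ^J satisfy Σ_{j∈I} ν_j = 0 and min_{j∈I} ν_j < 0, and suppose the coordinates are ordered so that ν_1/β_1 ≥ ν_2/β_2 ≥ … ≥ ν_J/β_J. Set S := {j ∈ I : ν_j/β_j < ν_1/β_1}. Then S is nonempty, S ≠ I, there exists j_* ∈ I with S = {j_*, j_*+1, …, J}, r_S := (−Σ_{j∈S} ν_j)/(1 − Σ_{j∈S} β_j) = ν_1/β_1 > 0, for every j ∈ I one has ν_j/β_j < r_S if and only if j ∈ S, and ν_j = −β_j (Σ_{k∈S} ν_k)/(1 − Σ_{k∈S} β_k) for every j ∉ S. -/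
/-! Let `c = ν_1/β_1` be the largest ratio. Since `Σ ν = 0` and some `ν_j < 0`, some `ν_k > 0`,
so `c > 0`, and every `j` with `ν_j < 0` lies in `S`. Off `S` the ratio is maximal, so
`ν_j = c β_j` there; summing over `Sᶜ` and using `Σ ν = 0`, `Σ β = 1` gives
`-Σ_S ν = c (1 - Σ_S β)`, i.e. `r_S = c`. As the ratios decrease, `S` is a final segment. -/

open Finset

section Ratios

variable {ι : Type*} [Fintype ι] {β ν : ι → ℝ}

lemma pos_of_forall_div_le_of_sum_eq_zero (hβ : ∀ i, 0 < β i) (hνsum : ∑ j, ν j = 0)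
    (hνneg : ∃ j, ν j < 0) {c : ℝ} (hle : ∀ j, ν j / β j ≤ c) : 0 < c := by
  obtain ⟨j, hj⟩ := hνneg
  obtain ⟨k, -, hk⟩ :=
    exists_pos_of_sum_zero_of_exists_nonzero ν hνsum ⟨j, mem_univ j, hj.ne⟩
  exact (div_pos hk (hβ k)).trans_le (hle k)

lemma neg_sum_div_one_sub_sum_eq_of_eq_mul_compl [DecidableEq ι] (hβ : ∀ i, 0 < β i)
    (hβsum : ∑ i, β i = 1) (hνsum : ∑ j, ν j = 0) {S : Finset ι} (hS : S ≠ univ) {c : ℝ}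
    (hout : ∀ j ∉ S, ν j = c * β j) :
    (-∑ j ∈ S, ν j) / (1 - ∑ j ∈ S, β j) = c := by
  have hν : -∑ j ∈ S, ν j = ∑ j ∈ Sᶜ, ν j := by
    linarith [sum_add_sum_compl S ν]
  have hβ' : 1 - ∑ j ∈ S, β j = ∑ j ∈ Sᶜ, β j := by
    linarith [sum_add_sum_compl S β]
  have hpos : 0 < ∑ j ∈ Sᶜ, β j :=
    sum_pos (fun i _ => hβ i) (nonempty_iff_ne_empty.mpr ((compl_eq_empty_iff S).not.mpr hS))
  rw [hν, hβ', sum_congr rfl fun j hj => hout j (mem_compl.mp hj), ← mul_sum,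
    mul_div_cancel_right₀ _ hpos.ne']

end Ratios

lemma Antitone.filter_lt_eq_filter_min'_le {α γ : Type*} [Fintype α] [LinearOrder α]
    [LinearOrder γ] {f : α → γ} (hf : Antitone f) {c : γ}
    (hne : (univ.filter fun j => f j < c).Nonempty) :
    univ.filter (fun j => f j < c) =
      univ.filter (fun j => (univ.filter fun j => f j < c).min' hne ≤ j) := by
  ext j
  simp only [mem_filter, mem_univ, true_and]
  refine ⟨fun hj => min'_le _ j (by simpa using hj), fun hj => (hf hj).trans_lt ?_⟩
  simpa using min'_mem _ hne

theorem gps_strictly_subcritical_set_characterization_general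
    (J : ℕ) (β : Fin J → ℝ)
    (hβ : ∀ i, 0 < β i ∧ β i < 1) (hβsum : ∑ i, β i = 1)
    (ν : Fin J → ℝ) (hνsum : ∑ j, ν j = 0) (hνmin : ∃ j, ν j < 0)
    (hord : ∀ i j : Fin J, i ≤ j → ν j / β j ≤ ν i / β i)
    (i0 : Fin J) (hi0 : (i0 : ℕ) = 0)
    (S : Finset (Fin J))
    (hS : S = Finset.univ.filter (fun j => ν j / β j < ν i0 / β i0)) :
    S.Nonempty ∧
    S ≠ Finset.univ ∧
    (∃ jstar : Fin J, S = Finset.univ.filter (fun j => jstar ≤ j)) ∧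
    (-∑ j ∈ S, ν j) / (1 - ∑ j ∈ S, β j) = ν i0 / β i0 ∧
    0 < ν i0 / β i0 ∧
    (∀ j, ν j / β j < (-∑ k ∈ S, ν k) / (1 - ∑ k ∈ S, β k) ↔ j ∈ S) ∧
    (∀ j ∉ S, ν j = -(β j) * (∑ k ∈ S, ν k) / (1 - ∑ k ∈ S, β k)) := by
  have hβpos i := (hβ i).1
  set c := ν i0 / β i0
  have hle j : ν j / β j ≤ c := hord i0 j (Fin.le_def.mpr (hi0 ▸ Nat.zero_le j))
  have hmem j : j ∈ S ↔ ν j / β j < c := by simp [hS]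
  have hcpos : 0 < c := pos_of_forall_div_le_of_sum_eq_zero hβpos hνsum hνmin hle
  have hSne : S.Nonempty := by
    obtain ⟨j, hj⟩ := hνmin
    exact ⟨j, (hmem j).mpr ((div_neg_of_neg_of_pos hj (hβpos j)).trans hcpos)⟩
  have hSuniv : S ≠ univ := fun h => (hmem i0).mp (h ▸ mem_univ i0) |>.false
  have hout : ∀ j ∉ S, ν j = c * β j := fun j hj =>
    (div_eq_iff (hβpos j).ne').mp ((hle j).antisymm (not_lt.mp (hj ∘ (hmem j).mpr)))
  have hrS := neg_sum_div_one_sub_sum_eq_of_eq_mul_compl hβpos hβsum hνsum hSuniv hout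
  refine ⟨hSne, hSuniv, ?_, hrS, hcpos, fun j => hrS ▸ (hmem j).symm, fun j hj => ?_⟩
  · rw [hS] at hSne ⊢
    exact ⟨_, Antitone.filter_lt_eq_filter_min'_le (f := fun j => ν j / β j) hord hSne⟩
  · rw [hout j hj, ← hrS]
    ring

/-- if `Σ_j ν_j = 0`, `min_j ν_j < 0`, and the coordinates are ordered so
that `ν_1/β_1 ≥ ν_2/β_2 ≥ … ≥ ν_J/β_J`, then `S = {j : ν_j/β_j < ν_1/β_1}` is nonempty,
proper, of the form `{j_*, …, J}`, `r_S = ν_1/β_1 > 0`, `ν_j/β_j < r_S ↔ j ∈ S`, and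
`ν_j = −β_j (Σ_{k∈S} ν_k)/(1 − Σ_{k∈S} β_k)` for `j ∉ S`. -/
theorem gps_strictly_subcritical_set_characterization
    (J : ℕ) (hJ : 2 ≤ J) (β : Fin J → ℝ)
    (hβ : ∀ i, 0 < β i ∧ β i < 1) (hβsum : ∑ i, β i = 1)
    (ν : Fin J → ℝ) (hνsum : ∑ j, ν j = 0) (hνmin : ∃ j, ν j < 0)
    (hord : ∀ i j : Fin J, i ≤ j → ν j / β j ≤ ν i / β i)
    (i0 : Fin J) (hi0 : (i0 : ℕ) = 0)
    (S : Finset (Fin J))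
    (hS : S = Finset.univ.filter (fun j => ν j / β j < ν i0 / β i0)) :
    S.Nonempty ∧
    S ≠ Finset.univ ∧
    (∃ jstar : Fin J, S = Finset.univ.filter (fun j => jstar ≤ j)) ∧
    (-∑ j ∈ S, ν j) / (1 - ∑ j ∈ S, β j) = ν i0 / β i0 ∧
    0 < ν i0 / β i0 ∧
    (∀ j, ν j / β j < (-∑ k ∈ S, ν k) / (1 - ∑ k ∈ S, β k) ↔ j ∈ S) ∧
    (∀ j ∉ S, ν j = -(β j) * (∑ k ∈ S, ν k) / (1 - ∑ k ∈ S, β k)) :=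
  gps_strictly_subcritical_set_characterization_general J β hβ hβsum ν hνsum hνmin hord i0 hi0 S hS
end

section
/- For j ∈ I, let P^{(j)} be the J×J real matrix whose k-th column is d_k for every k ≠ j and whose j-th column is e_j, and set Q^{(j)} := I − P^{(j)} (I the identity matrix). Then: all entries of Q^{(j)} are nonnegative; Q^{(j)}_{ij} = 0 for every i ∈ I; for k ≠ j, Q^{(j)}_{kk} = 0 and Q^{(j)}_{ik} = β_i/(1−β_k) for i ≠ k; Σ_{i∈I} Q^{(j)}_{ik} = 1 for every k ≠ j; for i ≠ j the (i,j) entry of the transpose of Q^{(j)} equals β_j/(1−β_i) > 0; and the spectral radius of Q^{(j)} is strictly less than 1. -/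
/-!
Entrywise, `Q^{(j)}` is `gpsQ β j`: a nonnegative matrix whose columns sum to `1`, except the
`j`-th, which vanishes. Since the column sums of `Q` form the vector `1 - e_j`, those of `Q²` are
`1 - [i = j] - Q_{ji} < 1`. So the ℓ^∞ operator norm of `(Qᵀ)²` is `< 1`, and Gelfand's bound
`ρ(Qᵀ) ≤ ‖(Qᵀ)²‖^{1/2}` together with `ρ(Q) = ρ(Qᵀ)` gives `ρ(Q) < 1`.
-/

open scoped Matrix ENNReal

attribute [local instance] Matrix.linftyOpNormedRing Matrix.linftyOpNormedAlgebra

section SpectralRadius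

variable {𝕜 A : Type*} [NontriviallyNormedField 𝕜] [NormedRing A] [NormedAlgebra 𝕜 A]
  [CompleteSpace A] [NormOneClass A]

theorem spectralRadius_lt_one_of_nnnorm_pow_lt_one {a : A} {m : ℕ} (hm : m ≠ 0)
    (ha : ‖a ^ m‖₊ < 1) : spectralRadius 𝕜 a < 1 := by
  obtain ⟨m, rfl⟩ := Nat.exists_eq_succ_of_ne_zero hm
  calc spectralRadius 𝕜 a ≤ (‖a ^ (m + 1)‖₊ : ℝ≥0∞) ^ (1 / (m + 1) : ℝ) := by
        simpa using spectrum.spectralRadius_le_pow_nnnorm_pow_one_div 𝕜 a m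
    _ < 1 := ENNReal.rpow_lt_one (mod_cast ha) (by positivity)

end SpectralRadius

namespace Matrix

variable {n : Type*} [Fintype n] [DecidableEq n]

theorem spectrum_transpose {R : Type*} [CommRing R] (A : Matrix n n R) :
    spectrum R Aᵀ = spectrum R A := by
  ext z
  rw [spectrum.mem_iff, spectrum.mem_iff, ← isUnit_transpose (algebraMap R _ z - A),
    transpose_sub, algebraMap_eq_diagonal, diagonal_transpose]

theorem spectralRadius_transpose {𝕜 : Type*} [NormedField 𝕜] (A : Matrix n n 𝕜) :
    spectralRadius 𝕜 Aᵀ = spectralRadius 𝕜 A := by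
  rw [spectralRadius, spectrum_transpose, spectralRadius]

theorem nnnorm_map_ofReal_transpose_lt_one {M : Matrix n n ℝ} (hM : ∀ i k, 0 ≤ M i k)
    (hcol : ∀ k, ∑ i, M i k < 1) : ‖(M.map ((↑) : ℝ → ℂ))ᵀ‖₊ < 1 := by
  rw [linfty_opNNNorm_def, Finset.sup_lt_iff zero_lt_one]
  intro k _
  rw [← NNReal.coe_lt_coe]
  push_cast
  simpa [Complex.norm_real, abs_of_nonneg (hM _ k)] using hcol k

theorem spectralRadius_map_ofReal_lt_one [Nonempty n] {M : Matrix n n ℝ}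
    (hM : ∀ i k, 0 ≤ M i k) {m : ℕ} (hm : m ≠ 0) (hcol : ∀ k, ∑ i, (M ^ m) i k < 1) :
    spectralRadius ℂ (M.map ((↑) : ℝ → ℂ)) < 1 := by
  rw [← spectralRadius_transpose]
  refine spectralRadius_lt_one_of_nnnorm_pow_lt_one hm ?_
  rw [← transpose_pow]
  change ‖((M.map Complex.ofRealHom) ^ m)ᵀ‖₊ < 1
  rw [← Matrix.map_pow]
  exact nnnorm_map_ofReal_transpose_lt_one (pow_apply_nonneg hM m) hcol

theorem one_vecMul_mul_self {R : Type*} [CommRing R] {M : Matrix n n R} {j : n}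
    (hM : 1 ᵥ* M = 1 - Pi.single j 1) : 1 ᵥ* (M * M) = 1 - Pi.single j 1 - M j := by
  rw [← vecMul_vecMul, hM, sub_vecMul, hM, single_one_vecMul]
  rfl

omit [DecidableEq n] in
theorem one_vecMul_apply {R : Type*} [NonAssocSemiring R] (M : Matrix n n R) (k : n) :
    (1 ᵥ* M) k = ∑ i, M i k := by
  simp [vecMul, dotProduct]

theorem spectralRadius_map_ofReal_lt_one_of_one_vecMul {M : Matrix n n ℝ} {j : n}
    (hM : ∀ i k, 0 ≤ M i k) (hcol : 1 ᵥ* M = 1 - Pi.single j 1) (hrow : ∀ i, i ≠ j → 0 < M j i) :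
    spectralRadius ℂ (M.map ((↑) : ℝ → ℂ)) < 1 := by
  have : Nonempty n := ⟨j⟩
  refine spectralRadius_map_ofReal_lt_one hM two_ne_zero fun k => ?_
  rw [pow_two, ← one_vecMul_apply, one_vecMul_mul_self hcol]
  rcases eq_or_ne k j with rfl | hkj
  · simp only [Pi.sub_apply, Pi.one_apply, Pi.single_eq_same, sub_self, zero_sub]
    linarith [hM k k]
  · simpa [hkj] using hrow k hkj

end Matrix

open Matrix

section GPS

variable {n : Type*} [Fintype n] [DecidableEq n]

noncomputable def gpsQ (β : n → ℝ) (j : n) : Matrix n n ℝ :=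
  of fun i k => if k = j ∨ i = k then 0 else β i / (1 - β k)

variable {β : n → ℝ} {j : n}

omit [Fintype n] in
@[simp]
theorem gpsQ_apply (i k : n) :
    gpsQ β j i k = if k = j ∨ i = k then 0 else β i / (1 - β k) :=
  rfl

omit [Fintype n] in
theorem gpsQ_nonneg (h0 : ∀ i, 0 ≤ β i) (h1 : ∀ i, β i ≤ 1) (i k : n) : 0 ≤ gpsQ β j i k := by
  rw [gpsQ_apply]
  split_ifs
  · exact le_rfl
  · exact div_nonneg (h0 i) (sub_nonneg.2 (h1 k))

omit [Fintype n] in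
theorem gpsQ_apply_pos {i : n} (hij : i ≠ j) (hj : 0 < β j) (hi : β i < 1) :
    0 < gpsQ β j j i := by
  rw [gpsQ_apply, if_neg (by tauto)]
  exact div_pos hj (sub_pos.2 hi)

theorem one_vecMul_gpsQ (hsum : ∑ i, β i = 1) (h1 : ∀ i, β i ≠ 1) :
    1 ᵥ* gpsQ β j = 1 - Pi.single j 1 := by
  ext k
  rw [one_vecMul_apply]
  rcases eq_or_ne k j with rfl | hkj
  · simp
  · have hk : 1 - β k ≠ 0 := sub_ne_zero.2 (h1 k).symm
    simp only [gpsQ_apply, hkj, false_or, Finset.sum_ite, Finset.sum_const_zero, zero_add]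
    rw [Finset.filter_ne', ← Finset.sum_div, Finset.sum_erase_eq_sub (Finset.mem_univ k), hsum]
    simp [hkj, hk]

end GPS

theorem gps_substochastic_matrix_properties_general
    (J : ℕ) (β : Fin J → ℝ)
    (hβ : ∀ i, 0 < β i ∧ β i < 1) (hβsum : ∑ i, β i = 1)
    (d : Fin J → Fin J → ℝ)
    (hd : ∀ i j, d i j = if j = i then 1 else -(β j) / (1 - β i))
    (j : Fin J)
    (P : Matrix (Fin J) (Fin J) ℝ)
    (hP : ∀ i k, P i k = if k = j then (if i = j then (1:ℝ) else 0) else d k i)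
    (Q : Matrix (Fin J) (Fin J) ℝ) (hQ : Q = 1 - P) :
    (∀ i k, 0 ≤ Q i k) ∧
    (∀ i, Q i j = 0) ∧
    (∀ k, k ≠ j → Q k k = 0 ∧ ∀ i, i ≠ k → Q i k = β i / (1 - β k)) ∧
    (∀ k, k ≠ j → ∑ i, Q i k = 1) ∧
    (∀ i, i ≠ j → Q.transpose i j = β j / (1 - β i) ∧ 0 < Q.transpose i j) ∧
    spectralRadius ℂ (Q.map (Complex.ofReal ·)) < 1 := by
  have hQ_eq : Q = gpsQ β j := by
    ext i k
    rw [hQ, Matrix.sub_apply, one_apply, hP, gpsQ_apply]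
    rcases eq_or_ne k j with rfl | hkj
    · simp
    · rcases eq_or_ne i k with rfl | hik
      · simp [hd, hkj]
      · simp [hd, hkj, hik, neg_div]
  subst hQ_eq
  have hnonneg := gpsQ_nonneg (j := j) (fun i => (hβ i).1.le) fun i => (hβ i).2.le
  have hcol := one_vecMul_gpsQ (j := j) hβsum fun i => (hβ i).2.ne
  have hrow : ∀ i, i ≠ j → 0 < gpsQ β j j i := fun i hij => gpsQ_apply_pos hij (hβ j).1 (hβ i).2
  refine ⟨hnonneg, fun i => by simp, fun k hkj => ⟨by simp, fun i hik => by simp [hkj, hik]⟩,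
    fun k hkj => ?_, fun i hij => ⟨by simp [hij, Ne.symm hij], hrow i hij⟩,
    spectralRadius_map_ofReal_lt_one_of_one_vecMul hnonneg hcol hrow⟩
  simpa [one_vecMul_apply, hkj] using congrFun hcol k

/-- properties of the matrix `Q^{(j)} = I − P^{(j)}`, where `P^{(j)}` has
`k`-th column `d_k` for `k ≠ j` and `j`-th column `e_j`: all entries of `Q^{(j)}` are
nonnegative, its `j`-th column vanishes, for `k ≠ j` its `k`-th column has zero diagonal
entry and off-diagonal entries `β_i/(1−β_k)` summing to `1`, for `i ≠ j` the `(i,j)`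
entry of its transpose is `β_j/(1−β_i) > 0`, and its spectral radius is `< 1`. -/
theorem gps_substochastic_matrix_properties
    (J : ℕ) (hJ : 2 ≤ J) (β : Fin J → ℝ)
    (hβ : ∀ i, 0 < β i ∧ β i < 1) (hβsum : ∑ i, β i = 1)
    (d : Fin J → Fin J → ℝ)
    (hd : ∀ i j, d i j = if j = i then 1 else -(β j) / (1 - β i))
    (j : Fin J)
    (P : Matrix (Fin J) (Fin J) ℝ)
    (hP : ∀ i k, P i k = if k = j then (if i = j then (1:ℝ) else 0) else d k i)
    (Q : Matrix (Fin J) (Fin J) ℝ) (hQ : Q = 1 - P) :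
    (∀ i k, 0 ≤ Q i k) ∧
    (∀ i, Q i j = 0) ∧
    (∀ k, k ≠ j → Q k k = 0 ∧ ∀ i, i ≠ k → Q i k = β i / (1 - β k)) ∧
    (∀ k, k ≠ j → ∑ i, Q i k = 1) ∧
    (∀ i, i ≠ j → Q.transpose i j = β j / (1 - β i) ∧ 0 < Q.transpose i j) ∧
    spectralRadius ℂ (Q.map (Complex.ofReal ·)) < 1 :=
  gps_substochastic_matrix_properties_general J β hβ hβsum d hd j P hP Q hQ
end
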